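/- arXiv:2402.01139 — 2 statements merged into one kernel-verified Lean document; each statement's English description precedes it below -/
import Mathlib

section
/- Suppose the step sizes η_t are deterministic and nonnegative with Σ_{t=1}^∞ η_t = ∞ and Σ_{t=1}^∞ η_t² < ∞. Let F : ℝ → [0,1] be a fixed nondecreasing function, continuous on all of ℝ, with F(q) = 0 for q < 0 and F(q) = 1 for q ≥ B, and suppose q* ∈ [0,B] is the unique (1−α)-quantile of F, i.e., F(q) < 1−α for all q < q* and F(q) > 1−α for all q > q*. Then for P-almost every ω the following implication holds: if F_t(ω, q) → F(q) as t → ∞ for every q ∈ ℝ, then Coverage_t(ω) = F_t(ω, q_t(ω)) → 1−α. -/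
open MeasureTheory Filter

private lemma det_upper (κ δ K L : ℝ) (hδ : 0 < δ) (hκ : 0 < κ)
    (e b z Q : ℕ → ℝ) (he0 : ∀ n, 0 ≤ e n) (hediv : ¬ Summable e)
    (hb : ∀ n, |b n| ≤ 1)
    (hQbd : ∀ n, -K ≤ Q n)
    (hrec : ∀ n, Q (n + 1) = Q n + e n * b n)
    (hdrift : ∀ᶠ n in atTop, L < Q n → b n - z n ≤ -κ)
    (he_small : ∀ᶠ n in atTop, e n ≤ δ)
    (hW : CauchySeq (fun n => ∑ s ∈ Finset.range n, e s * z s)) :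
    ∀ᶠ n in atTop, Q n ≤ L + 2 * δ := by
  set W : ℕ → ℝ := fun n => ∑ s ∈ Finset.range n, e s * z s with hWdef
  obtain ⟨T1, hT1⟩ := eventually_atTop.1 (hdrift.and he_small)
  obtain ⟨T2, hT2⟩ := Metric.cauchySeq_iff.1 hW δ hδ
  set T := max T1 T2 with hTdef
  have hT1' : ∀ n, T ≤ n → (L < Q n → b n - z n ≤ -κ) ∧ e n ≤ δ :=
    fun n hn => hT1 n (le_trans (le_max_left _ _) hn)
  have hWd : ∀ m n, T ≤ m → T ≤ n → |W m - W n| ≤ δ := by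
    intro m n hm hn
    have := hT2 m (le_trans (le_max_right _ _) hm) n (le_trans (le_max_right _ _) hn)
    rw [Real.dist_eq] at this
    exact this.le
  have htel : ∀ f : ℕ → ℝ, ∀ m n : ℕ, m ≤ n →
      (∑ s ∈ Finset.Ico m n, (f (s + 1) - f s)) = f n - f m := by
    intro f m n hmn
    rw [Finset.sum_Ico_eq_sub _ hmn, Finset.sum_range_sub, Finset.sum_range_sub]
    ring
  have hQtel : ∀ m n, m ≤ n → Q n - Q m = ∑ s ∈ Finset.Ico m n, e s * b s := by
    intro m n hmn
    rw [← htel Q m n hmn]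
    apply Finset.sum_congr rfl
    intro s _
    rw [hrec s]; ring
  have hWtel : ∀ m n, m ≤ n → W n - W m = ∑ s ∈ Finset.Ico m n, e s * z s := by
    intro m n hmn
    rw [Finset.sum_Ico_eq_sub _ hmn]
  have hentry : ∃ t0, T ≤ t0 ∧ Q t0 ≤ L := by
    by_contra hno
    push_neg at hno
    set E : ℕ → ℝ := fun n => ∑ s ∈ Finset.range n, e s with hEdef
    have hE : Tendsto E atTop atTop :=
      (not_summable_iff_tendsto_nat_atTop_of_nonneg he0).1 hediv
    have hbound : ∀ n, T ≤ n → Q n ≤ Q T - κ * (E n - E T) + δ := by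
      intro n hn
      have h1 := hQtel T n hn
      have h2 : ∑ s ∈ Finset.Ico T n, e s * b s =
          (∑ s ∈ Finset.Ico T n, e s * (b s - z s)) + ∑ s ∈ Finset.Ico T n, e s * z s := by
        rw [← Finset.sum_add_distrib]
        apply Finset.sum_congr rfl
        intros; ring
      have h3 : ∑ s ∈ Finset.Ico T n, e s * (b s - z s) ≤
          ∑ s ∈ Finset.Ico T n, e s * (-κ) := by
        apply Finset.sum_le_sum
        intro s hs
        have hsT : T ≤ s := (Finset.mem_Ico.1 hs).1
        exact mul_le_mul_of_nonneg_left ((hT1' s hsT).1 (hno s hsT)) (he0 s)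
      have h4 : ∑ s ∈ Finset.Ico T n, e s * (-κ) = -κ * (E n - E T) := by
        have h5 : E n - E T = ∑ s ∈ Finset.Ico T n, e s := (Finset.sum_Ico_eq_sub _ hn).symm
        rw [h5, ← Finset.sum_mul]
        ring
      have h5 := hWtel T n hn
      have h6 : W n - W T ≤ δ := le_trans (le_abs_self _) (hWd n T hn le_rfl)
      rw [h4] at h3
      linarith [h1, h2 ▸ h1]
    obtain ⟨n, hgt, hge⟩ :=
      ((hE.eventually_gt_atTop (E T + (Q T + δ + K) / κ)).and (eventually_ge_atTop T)).exists
    have hb1 := hbound n hge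
    have hb2 := hQbd n
    have h7 : (Q T + δ + K) / κ < E n - E T := by linarith
    rw [div_lt_iff₀ hκ] at h7
    nlinarith
  obtain ⟨t0, ht0T, ht0Q⟩ := hentry
  have hinv : ∀ n, t0 ≤ n → ∃ u, t0 ≤ u ∧ u ≤ n ∧ Q n ≤ L + δ + (W n - W u) := by
    intro n hn
    induction n, hn using Nat.le_induction with
    | base => exact ⟨t0, le_rfl, le_rfl, by simp; linarith⟩
    | succ n hn ih =>
      obtain ⟨u, hu1, hu2, hu3⟩ := ih
      have hnT : T ≤ n := le_trans ht0T hn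
      by_cases hc : Q n ≤ L
      · refine ⟨n + 1, le_trans hn (Nat.le_succ n), le_rfl, ?_⟩
        have h1 : e n * b n ≤ δ := by
          have h2 := (hT1' n hnT).2
          have h3 := abs_le.1 (hb n)
          nlinarith [he0 n]
        rw [hrec n]
        simp only [sub_self]
        linarith
      · push_neg at hc
        have hd := (hT1' n hnT).1 hc
        have hw : W (n + 1) - W n = e n * z n := by
          simp [hWdef, Finset.sum_range_succ]
        have hstep : Q (n + 1) ≤ Q n + (W (n + 1) - W n) := by
          rw [hrec n, hw]
          nlinarith [mul_le_mul_of_nonneg_left hd (he0 n), mul_nonneg (he0 n) hκ.le]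
        exact ⟨u, hu1, le_trans hu2 (Nat.le_succ n), by linarith⟩
  filter_upwards [eventually_ge_atTop t0] with n hn
  obtain ⟨u, hu1, hu2, hu3⟩ := hinv n hn
  have h1 := hWd n u (le_trans ht0T hn) (le_trans ht0T hu1)
  have h2 := le_trans (le_abs_self _) h1
  linarith

private lemma det_tendsto (α : ℝ) (hα0 : 0 ≤ α) (hα1 : α ≤ 1)
    (F : ℝ → ℝ) (qstar : ℝ) (hFcont : Continuous F)
    (hlt : ∀ r, r < qstar → F r < 1 - α) (hgt : ∀ r, qstar < r → 1 - α < F r)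
    (e : ℕ → ℝ) (he0 : ∀ n, 0 ≤ e n) (hediv : ¬ Summable e)
    (he_to0 : Tendsto e atTop (nhds 0))
    (G : ℕ → ℝ → ℝ) (hGmono : ∀ n, Monotone (G n))
    (hGconv : ∀ r, Tendsto (fun n => G n r) atTop (nhds (F r)))
    (Q : ℕ → ℝ) (K : ℝ) (hQbd : ∀ n, |Q n| ≤ K)
    (z : ℕ → ℝ)
    (hrec : ∀ n, Q (n + 1) = Q n + e n * ((1 - G n (Q n) - α) + z n))
    (hstep : ∀ n, |(1 - G n (Q n) - α) + z n| ≤ 1)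
    (hW : CauchySeq (fun n => ∑ s ∈ Finset.range n, e s * z s)) :
    Tendsto (fun n => G n (Q n)) atTop (nhds (1 - α)) := by
  -- F qstar = 1 - α
  have hFq : F qstar = 1 - α := by
    have hle : F qstar ≤ 1 - α := by
      have h1 : Tendsto F (nhdsWithin qstar (Set.Iio qstar)) (nhds (F qstar)) :=
        (hFcont.tendsto qstar).mono_left nhdsWithin_le_nhds
      exact le_of_tendsto h1 (eventually_nhdsWithin_of_forall fun r hr => (hlt r hr).le)
    have hge : 1 - α ≤ F qstar := by
      have h1 : Tendsto F (nhdsWithin qstar (Set.Ioi qstar)) (nhds (F qstar)) :=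
        (hFcont.tendsto qstar).mono_left nhdsWithin_le_nhds
      exact ge_of_tendsto h1 (eventually_nhdsWithin_of_forall fun r hr => (hgt r hr).le)
    linarith
  -- Q converges to qstar
  have hQconv : Tendsto Q atTop (nhds qstar) := by
    rw [Metric.tendsto_atTop]
    intro ε hε
    have hδ : 0 < ε / 4 := by positivity
    set δ := ε / 4 with hδdef
    -- upper bound
    have hκ1 : 0 < (F (qstar + δ) - (1 - α)) / 2 := by
      have := hgt (qstar + δ) (by linarith)
      linarith
    have hup : ∀ᶠ n in atTop, Q n ≤ (qstar + δ) + 2 * δ := by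
      apply det_upper ((F (qstar + δ) - (1 - α)) / 2) δ K (qstar + δ) hδ hκ1
        e (fun n => (1 - G n (Q n) - α) + z n) z Q he0 hediv hstep
        (fun n => (abs_le.1 (hQbd n)).1) hrec ?_
        (he_to0.eventually (eventually_le_nhds hδ)) hW
      filter_upwards [(hGconv (qstar + δ)).eventually
        (eventually_gt_nhds (show (1 - α) + (F (qstar + δ) - (1 - α)) / 2 < F (qstar + δ) by
          linarith))] with n hGn hQn
      have hm := hGmono n (le_of_lt hQn)
      have : (1 - G n (Q n) - α + z n) - z n = 1 - G n (Q n) - α := by ring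
      rw [this]
      linarith
    -- lower bound
    have hκ2 : 0 < ((1 - α) - F (qstar - δ)) / 2 := by
      have := hlt (qstar - δ) (by linarith)
      linarith
    have hlow : ∀ᶠ n in atTop, -Q n ≤ (-(qstar - δ)) + 2 * δ := by
      have hWneg : CauchySeq (fun n => ∑ s ∈ Finset.range n, e s * (-z s)) := by
        have hEq : (fun n => ∑ s ∈ Finset.range n, e s * (-z s)) =
            fun n => -(∑ s ∈ Finset.range n, e s * z s) := by
          funext n
          rw [← Finset.sum_neg_distrib]
          apply Finset.sum_congr rfl
          intros; ring
        rw [hEq]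
        exact hW.neg
      apply det_upper (((1 - α) - F (qstar - δ)) / 2) δ K (-(qstar - δ)) hδ hκ2
        e (fun n => -((1 - G n (Q n) - α) + z n)) (fun n => -z n) (fun n => -Q n) he0 hediv
        (fun n => by rw [abs_neg]; exact hstep n)
        (fun n => neg_le_neg (abs_le.1 (hQbd n)).2)
        (fun n => by show -Q (n + 1) = -Q n + e n * -(1 - G n (Q n) - α + z n); rw [hrec n]; ring) ?_
        (he_to0.eventually (eventually_le_nhds hδ)) hWneg
      filter_upwards [(hGconv (qstar - δ)).eventually
        (eventually_lt_nhds (show F (qstar - δ) < (1 - α) - ((1 - α) - F (qstar - δ)) / 2 by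
          linarith))] with n hGn hQn
      have hQn' : Q n < qstar - δ := by linarith
      have hm := hGmono n (le_of_lt hQn')
      have : -(1 - G n (Q n) - α + z n) - -z n = G n (Q n) - (1 - α) := by ring
      rw [this]
      linarith
    rw [← eventually_atTop]
    filter_upwards [hup, hlow] with n h1 h2
    rw [Real.dist_eq, abs_lt]
    constructor <;> [linarith; linarith]
  -- conclude
  rw [Metric.tendsto_atTop]
  intro ε hε
  obtain ⟨δ, hδpos, hδ⟩ :=
    Metric.continuousAt_iff.1 (hFcont.continuousAt (x := qstar)) (ε / 2) (by linarith)
  have e1 : ∀ᶠ n in atTop, |Q n - qstar| < δ / 2 := by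
    obtain ⟨N, hN⟩ := Metric.tendsto_atTop.1 hQconv (δ / 2) (by positivity)
    rw [eventually_atTop]
    exact ⟨N, fun n hn => by have := hN n hn; rwa [Real.dist_eq] at this⟩
  have hFup : F (qstar + δ / 2) < F qstar + ε := by
    have h1 := hδ (x := qstar + δ / 2) (by rw [Real.dist_eq]; rw [abs_lt]; constructor <;> linarith)
    rw [Real.dist_eq, abs_lt] at h1
    linarith
  have hFlow : F qstar - ε < F (qstar - δ / 2) := by
    have h1 := hδ (x := qstar - δ / 2) (by rw [Real.dist_eq]; rw [abs_lt]; constructor <;> linarith)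
    rw [Real.dist_eq, abs_lt] at h1
    linarith
  have e2 : ∀ᶠ n in atTop, G n (qstar + δ / 2) < F qstar + ε :=
    (hGconv (qstar + δ / 2)).eventually (eventually_lt_nhds hFup)
  have e3 : ∀ᶠ n in atTop, F qstar - ε < G n (qstar - δ / 2) :=
    (hGconv (qstar - δ / 2)).eventually (eventually_gt_nhds hFlow)
  rw [← eventually_atTop]
  filter_upwards [e1, e2, e3] with n h1 h2 h3
  rw [abs_lt] at h1
  have hu : G n (Q n) ≤ G n (qstar + δ / 2) := hGmono n (by linarith)
  have hl : G n (qstar - δ / 2) ≤ G n (Q n) := hGmono n (by linarith)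
  rw [Real.dist_eq, abs_lt, ← hFq]
  constructor <;> linarith



private lemma condexp_cdf_comp
    {Ω : Type*} {m : MeasurableSpace Ω} {mΩ : MeasurableSpace Ω} (hm : m ≤ mΩ)
    (μ : Measure Ω) [IsProbabilityMeasure μ]
    (S : Ω → ℝ) (hS : Measurable[mΩ] S)
    (Fc : Ω → ℝ → ℝ)
    (hFc01 : ∀ ω r, Fc ω r ∈ Set.Icc (0 : ℝ) 1)
    (hFc_meas : ∀ r : ℝ, Measurable[m] (fun ω => Fc ω r))
    (hFc_cond : ∀ r : ℝ, (fun ω => Fc ω r) =ᵐ[μ]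
      μ[fun ω => if S ω ≤ r then (1 : ℝ) else 0|m])
    (hFc_rc : ∀ᵐ ω ∂μ, ∀ r, ContinuousWithinAt (Fc ω) (Set.Ici r) r)
    (g : Ω → ℝ) (hg : Measurable[m] g) :
    ∃ h : Ω → ℝ, Measurable[m] h ∧ (h =ᵐ[μ] fun ω => Fc ω (g ω)) ∧
      h =ᵐ[μ] μ[fun ω => if S ω ≤ g ω then (1 : ℝ) else 0|m] := by
  classical
  haveI : SigmaFinite (μ.trim hm) := by
    haveI := isFiniteMeasure_trim (μ := μ) hm
    infer_instance
  set N : ℕ → Ω → ℤ := fun n ω => Int.ceil (g ω * 2 ^ n) with hNdef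
  have hpow : ∀ n : ℕ, (0 : ℝ) < 2 ^ n := fun n => by positivity
  have hN_meas : ∀ n, Measurable[m] (N n) := fun n => Int.measurable_ceil.comp (hg.mul_const _)
  have hNr_meas : ∀ n, Measurable[m] (fun ω => ((N n ω : ℝ) / 2 ^ n)) := fun n =>
    (measurable_from_top.comp (hN_meas n)).div_const _
  have hNrΩ : ∀ n, Measurable[mΩ] (fun ω => ((N n ω : ℝ) / 2 ^ n)) := fun n =>
    (hNr_meas n).mono hm le_rfl
  have hgΩ : Measurable[mΩ] g := hg.mono hm le_rfl
  have hgn_ge : ∀ (n : ℕ) (ω : Ω), g ω ≤ (N n ω : ℝ) / 2 ^ n := by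
    intro n ω
    rw [le_div_iff₀ (hpow n)]
    exact Int.le_ceil _
  have hgn_le : ∀ (n : ℕ) (ω : Ω), (N n ω : ℝ) / 2 ^ n ≤ g ω + (1 / 2) ^ n := by
    intro n ω
    rw [one_div_pow, div_le_iff₀ (hpow n), add_mul, div_mul_cancel₀ _ (ne_of_gt (hpow n))]
    have := Int.ceil_lt_add_one (g ω * 2 ^ n)
    push_cast
    linarith [this]
  have hgn_tendsto : ∀ ω, Tendsto (fun n => (N n ω : ℝ) / 2 ^ n) atTop (nhds (g ω)) := by
    intro ω
    have hup : Tendsto (fun n : ℕ => g ω + (1 / 2 : ℝ) ^ n) atTop (nhds (g ω + 0)) :=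
      tendsto_const_nhds.add
        (tendsto_pow_atTop_nhds_zero_of_lt_one (by norm_num) (by norm_num))
    rw [add_zero] at hup
    exact tendsto_of_tendsto_of_tendsto_of_le_of_le tendsto_const_nhds hup
      (fun n => hgn_ge n ω) (fun n => hgn_le n ω)
  -- measurability of the composed CDF at dyadic levels
  have hFcgn_meas : ∀ n, Measurable[m] (fun ω => Fc ω ((N n ω : ℝ) / 2 ^ n)) := by
    intro n
    have h1 : @Measurable (Ω × ℤ) ℝ (@Prod.instMeasurableSpace Ω ℤ m _) _
        (fun p => Fc p.1 ((p.2 : ℝ) / 2 ^ n)) :=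
      measurable_from_prod_countable_left (fun j => hFc_meas ((j : ℝ) / 2 ^ n))
    have h2 : @Measurable Ω (Ω × ℤ) m (@Prod.instMeasurableSpace Ω ℤ m _)
        (fun ω => (ω, N n ω)) := Measurable.prodMk measurable_id (hN_meas n)
    exact h1.comp h2
  -- the candidate function
  set h : Ω → ℝ := fun ω => liminf (fun n => Fc ω ((N n ω : ℝ) / 2 ^ n)) atTop with hhdef
  have hh_meas : Measurable[m] h := Measurable.liminf hFcgn_meas
  have hhΩ : Measurable[mΩ] h := hh_meas.mono hm le_rfl
  have hFcgnΩ : ∀ n, Measurable[mΩ] (fun ω => Fc ω ((N n ω : ℝ) / 2 ^ n)) := fun n =>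
    (hFcgn_meas n).mono hm le_rfl
  -- h agrees a.e. with Fc ∘ g
  have htendsto_ae : ∀ᵐ ω ∂μ,
      Tendsto (fun n => Fc ω ((N n ω : ℝ) / 2 ^ n)) atTop (nhds (Fc ω (g ω))) := by
    filter_upwards [hFc_rc] with ω hrc
    have h1 : Tendsto (fun n => (N n ω : ℝ) / 2 ^ n) atTop
        (nhdsWithin (g ω) (Set.Ici (g ω))) := by
      rw [tendsto_nhdsWithin_iff]
      exact ⟨hgn_tendsto ω, Eventually.of_forall fun n => hgn_ge n ω⟩
    exact ((hrc (g ω)).tendsto).comp h1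
  have hae : h =ᵐ[μ] fun ω => Fc ω (g ω) := by
    filter_upwards [htendsto_ae] with ω hconv
    exact hconv.liminf_eq
  -- pointwise convergence of indicators
  have hind_conv : ∀ ω, Tendsto (fun n => (if S ω ≤ (N n ω : ℝ) / 2 ^ n then (1 : ℝ) else 0))
      atTop (nhds (if S ω ≤ g ω then (1 : ℝ) else 0)) := by
    intro ω
    by_cases hc : S ω ≤ g ω
    · rw [if_pos hc]
      have heq : ∀ n, (if S ω ≤ (N n ω : ℝ) / 2 ^ n then (1 : ℝ) else 0) = 1 :=
        fun n => if_pos (le_trans hc (hgn_ge n ω))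
      exact tendsto_const_nhds.congr (fun n => (heq n).symm)
    · rw [if_neg hc]
      push_neg at hc
      have hev : ∀ᶠ n in atTop, (N n ω : ℝ) / 2 ^ n < S ω :=
        (hgn_tendsto ω).eventually (eventually_lt_nhds hc)
      refine tendsto_const_nhds.congr' ?_
      filter_upwards [hev] with n hn
      rw [if_neg (not_le.2 hn)]
  -- boundedness-based integrability
  have hbint : ∀ f : Ω → ℝ, AEStronglyMeasurable f μ → (∀ᵐ ω ∂μ, |f ω| ≤ 1) →
      Integrable f μ := fun f hmeas hb =>
    (integrable_const (1 : ℝ)).mono' hmeas (by simpa [Real.norm_eq_abs] using hb)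
  have hind_meas : ∀ n, Measurable[mΩ]
      (fun ω => (if S ω ≤ (N n ω : ℝ) / 2 ^ n then (1 : ℝ) else 0)) := by
    intro n
    exact Measurable.ite (measurableSet_le hS (hNrΩ n))
      measurable_const measurable_const
  have hindg_meas : Measurable[mΩ] (fun ω => (if S ω ≤ g ω then (1 : ℝ) else 0)) :=
    Measurable.ite (measurableSet_le hS hgΩ) measurable_const measurable_const
  -- step 1 : equality of set integrals at each dyadic level
  have step1 : ∀ (n : ℕ) (A : Set Ω), MeasurableSet[m] A →
      ∫ ω in A, Fc ω ((N n ω : ℝ) / 2 ^ n) ∂μ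
        = ∫ ω in A, (if S ω ≤ (N n ω : ℝ) / 2 ^ n then (1 : ℝ) else 0) ∂μ := by
    intro n A hA
    set Aj : ℤ → Set Ω := fun j => A ∩ (N n ⁻¹' {j}) with hAjdef
    have hAjm_m : ∀ j, MeasurableSet[m] (Aj j) :=
      fun j => hA.inter (hN_meas n (measurableSet_singleton j))
    have hAjm : ∀ j, MeasurableSet[mΩ] (Aj j) := fun j => hm _ (hAjm_m j)
    have hdisj : Pairwise (Function.onFun Disjoint Aj) := by
      intro i j hij
      rw [Function.onFun, Set.disjoint_left]
      rintro ω ⟨-, hi⟩ ⟨-, hj⟩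
      exact hij (hi.symm.trans hj)
    have hunion : ⋃ j, Aj j = A := by
      ext ω
      simp only [Set.mem_iUnion, hAjdef, Set.mem_inter_iff, Set.mem_preimage,
        Set.mem_singleton_iff]
      exact ⟨fun ⟨j, hj, _⟩ => hj, fun hω => ⟨N n ω, hω, rfl⟩⟩
    have hint1 : IntegrableOn (fun ω => Fc ω ((N n ω : ℝ) / 2 ^ n)) A μ :=
      (hbint _ (hFcgnΩ n).aestronglyMeasurable
        (Eventually.of_forall fun ω => abs_le.2
          ⟨by linarith [(hFc01 ω ((N n ω : ℝ) / 2 ^ n)).1],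
            (hFc01 ω ((N n ω : ℝ) / 2 ^ n)).2⟩)).integrableOn
    have hint2 : IntegrableOn
        (fun ω => (if S ω ≤ (N n ω : ℝ) / 2 ^ n then (1 : ℝ) else 0)) A μ :=
      (hbint _ (hind_meas n).aestronglyMeasurable
        (Eventually.of_forall fun ω => by split <;> simp)).integrableOn
    rw [← hunion] at hint1 hint2 ⊢
    rw [integral_iUnion hAjm hdisj hint1, integral_iUnion hAjm hdisj hint2]
    apply tsum_congr
    intro j
    have hmem : ∀ ω ∈ Aj j, (N n ω : ℝ) / 2 ^ n = (j : ℝ) / 2 ^ n := by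
      rintro ω ⟨-, hω⟩
      rw [Set.mem_preimage, Set.mem_singleton_iff] at hω
      rw [hω]
    calc ∫ ω in Aj j, Fc ω ((N n ω : ℝ) / 2 ^ n) ∂μ
        = ∫ ω in Aj j, Fc ω ((j : ℝ) / 2 ^ n) ∂μ := by
          apply setIntegral_congr_fun (hAjm j)
          intro ω hω
          exact congrArg (Fc ω) (hmem ω hω)
      _ = ∫ ω in Aj j, (μ[fun ω' => if S ω' ≤ (j : ℝ) / 2 ^ n then (1 : ℝ) else 0|m]) ω ∂μ :=
          setIntegral_congr_ae (hAjm j)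
            ((hFc_cond ((j : ℝ) / 2 ^ n)).mono fun ω hω => fun _ => hω)
      _ = ∫ ω in Aj j, (if S ω ≤ (j : ℝ) / 2 ^ n then (1 : ℝ) else 0) ∂μ := by
          apply setIntegral_condExp hm ?_ (hAjm_m j)
          exact hbint _ (Measurable.ite (measurableSet_le hS measurable_const)
            measurable_const measurable_const).aestronglyMeasurable
            (Eventually.of_forall fun ω => by split <;> simp)
      _ = ∫ ω in Aj j, (if S ω ≤ (N n ω : ℝ) / 2 ^ n then (1 : ℝ) else 0) ∂μ := by
          apply setIntegral_congr_fun (hAjm j)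
          intro ω hω
          exact congrArg (fun r => if S ω ≤ r then (1 : ℝ) else 0) (hmem ω hω).symm
  -- step 2 : set integrals of h agree with those of the target indicator
  have step2 : ∀ A : Set Ω, MeasurableSet[m] A →
      ∫ ω in A, h ω ∂μ = ∫ ω in A, (if S ω ≤ g ω then (1 : ℝ) else 0) ∂μ := by
    intro A hA
    have hAm : MeasurableSet[mΩ] A := hm _ hA
    have hlim1 : Tendsto (fun n => ∫ ω in A, Fc ω ((N n ω : ℝ) / 2 ^ n) ∂μ) atTop
        (nhds (∫ ω in A, h ω ∂μ)) := by
      apply tendsto_integral_of_dominated_convergence (fun _ => (1 : ℝ))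
      · exact fun n => (hFcgnΩ n).aestronglyMeasurable.restrict
      · exact integrable_const 1
      · intro n
        refine Eventually.of_forall fun ω => ?_
        rw [Real.norm_eq_abs, abs_le]
        exact ⟨by linarith [(hFc01 ω ((N n ω : ℝ) / 2 ^ n)).1],
          (hFc01 ω ((N n ω : ℝ) / 2 ^ n)).2⟩
      · apply ae_restrict_of_ae
        filter_upwards [htendsto_ae, hae] with ω h1 h2
        rw [h2]
        exact h1
    have hlim2 : Tendsto
        (fun n => ∫ ω in A, (if S ω ≤ (N n ω : ℝ) / 2 ^ n then (1 : ℝ) else 0) ∂μ) atTop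
        (nhds (∫ ω in A, (if S ω ≤ g ω then (1 : ℝ) else 0) ∂μ)) := by
      apply tendsto_integral_of_dominated_convergence (fun _ => (1 : ℝ))
      · exact fun n => (hind_meas n).aestronglyMeasurable.restrict
      · exact integrable_const 1
      · intro n
        refine Eventually.of_forall fun ω => ?_
        rw [Real.norm_eq_abs]
        split <;> simp
      · exact ae_restrict_of_ae (Eventually.of_forall hind_conv)
    exact tendsto_nhds_unique (hlim1.congr fun n => step1 n A hA) hlim2
  refine ⟨h, hh_meas, hae, ?_⟩
  have hh_bd : ∀ᵐ ω ∂μ, |h ω| ≤ 1 := by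
    filter_upwards [hae] with ω hω
    rw [hω]
    exact abs_le.2 ⟨by linarith [(hFc01 ω (g ω)).1], (hFc01 ω (g ω)).2⟩
  have hh_int : Integrable h μ :=
    hbint _ hhΩ.aestronglyMeasurable hh_bd
  refine ae_eq_condExp_of_forall_setIntegral_eq hm
    (hbint _ hindg_meas.aestronglyMeasurable (Eventually.of_forall fun ω => by split <;> simp))
    (fun s hs _ => hh_int.integrableOn)
    (fun s hs _ => step2 s hs)
    (StronglyMeasurable.aestronglyMeasurable (Measurable.stronglyMeasurable hh_meas))

/-- **Convergence of instantaneous coverage with online-trained scores.**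
Fix `α ∈ (0,1)` and `B > 0`. Let `(ℱ t)` be a filtration, `(S t)_{t ≥ 1}` scores in `[0,B]`
with `S t` being `ℱ t`-measurable, and `Fc t ω` a regular conditional CDF of `S t` given
`ℱ (t-1)`. Suppose the deterministic nonnegative step sizes satisfy `∑_{t≥1} η t = ∞` and
`∑_{t≥1} (η t)² < ∞`. Let `F` be a fixed continuous CDF supported on `[0,B]` with unique
`(1-α)`-quantile `q* ∈ [0,B]`. Then for the online conformal update
`q (t+1) = q t + η t * (1{S t > q t} - α)` with deterministic `q 1 = q1 ∈ [0,B]`, for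
almost every `ω`: if `Fc t ω r → F r` for every `r`, then
`Coverage_t ω = Fc t ω (q t ω) → 1 - α`. -/
theorem coverage_converges_online_training
    {Ω : Type*} {mΩ : MeasurableSpace Ω} (μ : Measure Ω) [IsProbabilityMeasure μ]
    (ℱ : Filtration ℕ mΩ)
    (α B : ℝ) (hα : α ∈ Set.Ioo (0 : ℝ) 1) (hB : 0 < B)
    (S : ℕ → Ω → ℝ)
    (hSrange : ∀ t, 1 ≤ t → ∀ ω, S t ω ∈ Set.Icc 0 B)
    (hSmeas : ∀ t, 1 ≤ t → Measurable[ℱ t] (S t))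
    (Fc : ℕ → Ω → ℝ → ℝ)
    (hFc01 : ∀ t, 1 ≤ t → ∀ ω r, Fc t ω r ∈ Set.Icc (0 : ℝ) 1)
    (hFc_meas : ∀ t, 1 ≤ t → ∀ r, Measurable[ℱ (t - 1)] (fun ω => Fc t ω r))
    (hFc_cond : ∀ t, 1 ≤ t → ∀ r : ℝ,
      (fun ω => Fc t ω r) =ᵐ[μ] μ[fun ω => if S t ω ≤ r then (1 : ℝ) else 0|ℱ (t - 1)])
    (hFc_cdf : ∀ t, 1 ≤ t → ∀ᵐ ω ∂μ,
      Monotone (Fc t ω) ∧ (∀ r, ContinuousWithinAt (Fc t ω) (Set.Ici r) r) ∧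
      (∀ r, r < 0 → Fc t ω r = 0) ∧ (∀ r, B ≤ r → Fc t ω r = 1))
    (η : ℕ → ℝ)
    (hη_nonneg : ∀ t, 1 ≤ t → 0 ≤ η t)
    (hη_div : ¬ Summable (fun t => η (t + 1)))
    (hη_sq : Summable (fun t => (η (t + 1)) ^ 2))
    (F : ℝ → ℝ)
    (hF01 : ∀ r, F r ∈ Set.Icc (0 : ℝ) 1)
    (hFmono : Monotone F)
    (hFcont : Continuous F)
    (hF0 : ∀ r, r < 0 → F r = 0) (hF1 : ∀ r, B ≤ r → F r = 1)
    (qstar : ℝ) (hqstar : qstar ∈ Set.Icc 0 B)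
    (hlt : ∀ r, r < qstar → F r < 1 - α)
    (hgt : ∀ r, qstar < r → 1 - α < F r)
    (q1 : ℝ) (hq1 : q1 ∈ Set.Icc 0 B)
    (q : ℕ → Ω → ℝ) (hq_init : ∀ ω, q 1 ω = q1)
    (hrec : ∀ t, 1 ≤ t → ∀ ω,
      q (t + 1) ω = q t ω + η t * ((if q t ω < S t ω then (1 : ℝ) else 0) - α)) :
    ∀ᵐ ω ∂μ,
      (∀ r : ℝ, Tendsto (fun t => Fc t ω r) atTop (nhds (F r))) →
      Tendsto (fun t => Fc t ω (q t ω)) atTop (nhds (1 - α)) := by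
  classical
  -- measurability of q
  have hqmeas : ∀ n : ℕ, Measurable[ℱ n] (q (n + 1)) := by
    intro n
    induction n with
    | zero =>
      have hq1' : q 1 = fun _ => q1 := funext hq_init
      rw [hq1']
      exact measurable_const
    | succ n ih =>
      have hqe : q (n + 2) = fun ω =>
          q (n + 1) ω + η (n + 1) * ((if q (n + 1) ω < S (n + 1) ω then (1 : ℝ) else 0) - α) :=
        funext fun ω => hrec (n + 1) (Nat.le_add_left 1 n) ω
      rw [hqe]
      have hq' : Measurable[ℱ (n + 1)] (q (n + 1)) := ih.mono (ℱ.mono (Nat.le_succ n)) le_rfl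
      have hS' : Measurable[ℱ (n + 1)] (S (n + 1)) := hSmeas (n + 1) (Nat.le_add_left 1 n)
      exact hq'.add (((Measurable.ite (measurableSet_lt hq' hS') measurable_const
        measurable_const).sub measurable_const).const_mul _)
  -- the conditional coverage processes
  have key : ∀ n : ℕ, ∃ h : Ω → ℝ, Measurable[ℱ n] h ∧
      (h =ᵐ[μ] fun ω => Fc (n + 1) ω (q (n + 1) ω)) ∧
      h =ᵐ[μ] μ[fun ω => if S (n + 1) ω ≤ q (n + 1) ω then (1 : ℝ) else 0|ℱ n] := by
    intro n
    exact condexp_cdf_comp (ℱ.le n) μ (S (n + 1))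
      ((hSmeas (n + 1) (Nat.le_add_left 1 n)).mono (ℱ.le (n + 1)) le_rfl)
      (Fc (n + 1)) (hFc01 (n + 1) (Nat.le_add_left 1 n)) (hFc_meas (n + 1) (Nat.le_add_left 1 n))
      (hFc_cond (n + 1) (Nat.le_add_left 1 n))
      ((hFc_cdf (n + 1) (Nat.le_add_left 1 n)).mono fun ω hω => hω.2.1)
      (q (n + 1)) (hqmeas n)
  choose h hmeas hae hcond using key
  have hh01 : ∀ n, ∀ᵐ ω ∂μ, h n ω ∈ Set.Icc (0 : ℝ) 1 := by
    intro n
    filter_upwards [hae n] with ω hω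
    rw [hω]
    exact hFc01 (n + 1) (Nat.le_add_left 1 n) ω _
  -- martingale increments
  set Z : ℕ → Ω → ℝ := fun n ω =>
    (if q (n + 1) ω < S (n + 1) ω then (1 : ℝ) else 0) - (1 - h n ω) with hZdef
  set M : ℕ → Ω → ℝ := fun k ω => ∑ s ∈ Finset.range k, η (s + 1) * Z s ω with hMdef
  have hZmeasF : ∀ n, Measurable[ℱ (n + 1)] (Z n) := by
    intro n
    have hq' : Measurable[ℱ (n + 1)] (q (n + 1)) :=
      (hqmeas n).mono (ℱ.mono (Nat.le_succ n)) le_rfl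
    have hS' : Measurable[ℱ (n + 1)] (S (n + 1)) := hSmeas (n + 1) (Nat.le_add_left 1 n)
    have hh' : Measurable[ℱ (n + 1)] (h n) := (hmeas n).mono (ℱ.mono (Nat.le_succ n)) le_rfl
    exact (Measurable.ite (measurableSet_lt hq' hS') measurable_const
      measurable_const).sub (measurable_const.sub hh')
  have hZmeasΩ : ∀ n, Measurable (Z n) := fun n => (hZmeasF n).mono (ℱ.le (n + 1)) le_rfl
  have hZbd : ∀ n, ∀ᵐ ω ∂μ, |Z n ω| ≤ 2 := by
    intro n
    filter_upwards [hh01 n] with ω hω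
    have hZω : Z n ω = (if q (n + 1) ω < S (n + 1) ω then (1 : ℝ) else 0) - (1 - h n ω) := rfl
    rw [hZω, abs_le]
    constructor <;> split_ifs <;> linarith [hω.1, hω.2]
  have hZint : ∀ n, Integrable (Z n) μ := fun n =>
    (integrable_const (2 : ℝ)).mono' (hZmeasΩ n).aestronglyMeasurable
      (by simpa [Real.norm_eq_abs] using hZbd n)
  have hhint : ∀ n, Integrable (h n) μ := by
    intro n
    refine (integrable_const (1 : ℝ)).mono'
      (((hmeas n).mono (ℱ.le n) le_rfl)).aestronglyMeasurable ?_
    filter_upwards [hh01 n] with ω hω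
    rw [Real.norm_eq_abs, abs_le]
    exact ⟨by linarith [hω.1], hω.2⟩
  have hindint : ∀ n, Integrable
      (fun ω => if S (n + 1) ω ≤ q (n + 1) ω then (1 : ℝ) else 0) μ := by
    intro n
    have hmeas' : Measurable (fun ω => if S (n + 1) ω ≤ q (n + 1) ω then (1 : ℝ) else 0) :=
      Measurable.ite (measurableSet_le ((hSmeas (n + 1) (Nat.le_add_left 1 n)).mono
        (ℱ.le (n + 1)) le_rfl) ((hqmeas n).mono (ℱ.le n) le_rfl))
        measurable_const measurable_const
    exact (integrable_const (1 : ℝ)).mono' hmeas'.aestronglyMeasurable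
      (Eventually.of_forall fun ω => by rw [Real.norm_eq_abs]; split <;> simp)
  -- conditional expectation of increments vanishes
  have hcondZ : ∀ n, μ[Z n|ℱ n] =ᵐ[μ] 0 := by
    intro n
    have h1 : Z n = (h n) - (fun ω => if S (n + 1) ω ≤ q (n + 1) ω then (1 : ℝ) else 0) := by
      funext ω
      show (if q (n + 1) ω < S (n + 1) ω then (1 : ℝ) else 0) - (1 - h n ω) = _
      simp only [Pi.sub_apply]
      by_cases hc : q (n + 1) ω < S (n + 1) ω
      · rw [if_pos hc, if_neg (not_le.2 hc)]; ring
      · rw [if_neg hc]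
        push_neg at hc
        rw [if_pos hc]; ring
    rw [h1]
    have h2 := condExp_sub (μ := μ) (m := ℱ n) (hhint n) (hindint n)
    have h3 : μ[h n|ℱ n] = h n :=
      condExp_of_stronglyMeasurable (ℱ.le n) (Measurable.stronglyMeasurable (hmeas n)) (hhint n)
    filter_upwards [h2, hcond n] with ω hω1 hω2
    rw [hω1]
    simp only [Pi.sub_apply, Pi.zero_apply, h3]
    rw [← hω2]
    ring
  -- the martingale
  have hMadapted : StronglyAdapted ℱ M := by
    intro k
    apply Measurable.stronglyMeasurable
    apply Finset.measurable_sum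
    intro s hs
    have hsk : s + 1 ≤ k := Finset.mem_range.1 hs
    exact ((hZmeasF s).mono (ℱ.mono hsk) le_rfl).const_mul _
  have hMint : ∀ k, Integrable (M k) μ := fun k =>
    integrable_finset_sum _ (fun s _ => (hZint s).const_mul _)
  have hMsucc : ∀ k, M (k + 1) = fun ω => M k ω + η (k + 1) * Z k ω := by
    intro k
    funext ω
    show ∑ s ∈ Finset.range (k + 1), η (s + 1) * Z s ω = _
    rw [Finset.sum_range_succ]
  have hmart : Martingale M ℱ μ := by
    apply martingale_nat hMadapted hMint
    intro n
    have h1 : μ[M (n + 1)|ℱ n] =ᵐ[μ] μ[M n|ℱ n] + μ[fun ω => η (n + 1) * Z n ω|ℱ n] := by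
      rw [hMsucc n]
      exact condExp_add (hMint n) ((hZint n).const_mul _) _
    have h2 : μ[M n|ℱ n] = M n :=
      condExp_of_stronglyMeasurable (ℱ.le n) (hMadapted n) (hMint n)
    have h3 : μ[fun ω => η (n + 1) * Z n ω|ℱ n]
        =ᵐ[μ] fun ω => η (n + 1) * (μ[Z n|ℱ n]) ω := by
      have h4 := condExp_smul (μ := μ) (m := ℱ n) (η (n + 1)) (Z n)
      have h5 : (η (n + 1) • Z n) = fun ω => η (n + 1) * Z n ω := by
        funext x; simp [smul_eq_mul]
      rw [h5] at h4
      filter_upwards [h4] with ω hω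
      rw [hω]
      simp [smul_eq_mul]
    symm
    filter_upwards [h1, h3, hcondZ n] with ω hω1 hω3 hω0
    rw [hω1]
    simp only [Pi.add_apply, h2, hω3]
    rw [hω0]
    simp
  -- a.e. uniform bound events
  have hZbd_all : ∀ᵐ ω ∂μ, ∀ s, |Z s ω| ≤ 2 := ae_all_iff.2 hZbd
  have hMbd : ∀ k, ∀ᵐ ω ∂μ, |M k ω| ≤ 2 * ∑ s ∈ Finset.range k, η (s + 1) := by
    intro k
    filter_upwards [hZbd_all] with ω hω
    calc |M k ω| ≤ ∑ s ∈ Finset.range k, |η (s + 1) * Z s ω| :=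
          Finset.abs_sum_le_sum_abs _ _
      _ ≤ ∑ s ∈ Finset.range k, η (s + 1) * 2 := by
          apply Finset.sum_le_sum
          intro s _
          rw [abs_mul, abs_of_nonneg (hη_nonneg (s + 1) (Nat.le_add_left 1 s))]
          exact mul_le_mul_of_nonneg_left (hω s) (hη_nonneg (s + 1) (Nat.le_add_left 1 s))
      _ = 2 * ∑ s ∈ Finset.range k, η (s + 1) := by
          rw [Finset.mul_sum]
          apply Finset.sum_congr rfl
          intros; ring
  have hMmeasΩ : ∀ k, Measurable (M k) := fun k =>
    ((hMadapted k).measurable).mono (ℱ.le k) le_rfl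
  have hMsq_int : ∀ k, Integrable (fun ω => (M k ω) ^ 2) μ := by
    intro k
    refine (integrable_const ((2 * ∑ s ∈ Finset.range k, η (s + 1)) ^ 2)).mono'
      ((hMmeasΩ k).pow_const 2).aestronglyMeasurable ?_
    filter_upwards [hMbd k] with ω hω
    rw [Real.norm_eq_abs, abs_pow]
    exact pow_le_pow_left₀ (abs_nonneg _) hω 2
  have hMZ_int : ∀ k, Integrable (M k * Z k) μ := by
    intro k
    refine (integrable_const ((2 * ∑ s ∈ Finset.range k, η (s + 1)) * 2)).mono'
      ((hMmeasΩ k).mul (hZmeasΩ k)).aestronglyMeasurable ?_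
    filter_upwards [hMbd k, hZbd k] with ω h1 h2
    rw [Real.norm_eq_abs, Pi.mul_apply, abs_mul]
    exact mul_le_mul h1 h2 (abs_nonneg _) (le_trans (abs_nonneg _) h1)
  have hZsq_int : ∀ k, Integrable (fun ω => (Z k ω) ^ 2) μ := by
    intro k
    refine (integrable_const (4 : ℝ)).mono'
      ((hZmeasΩ k).pow_const 2).aestronglyMeasurable ?_
    filter_upwards [hZbd k] with ω hω
    rw [Real.norm_eq_abs, abs_pow]
    calc |Z k ω| ^ 2 ≤ 2 ^ 2 := pow_le_pow_left₀ (abs_nonneg _) hω 2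
      _ = 4 := by norm_num
  -- orthogonality
  have hMZzero : ∀ k, ∫ ω, (M k * Z k) ω ∂μ = 0 := by
    intro k
    have hpull : μ[M k * Z k|ℱ k] =ᵐ[μ] M k * μ[Z k|ℱ k] :=
      condExp_mul_of_stronglyMeasurable_left (hMadapted k) (hMZ_int k) (hZint k)
    have h0 : M k * μ[Z k|ℱ k] =ᵐ[μ] 0 := by
      filter_upwards [hcondZ k] with ω hω
      rw [Pi.mul_apply, hω]
      simp
    have h1 : ∫ ω, (M k * Z k) ω ∂μ = ∫ ω, (μ[M k * Z k|ℱ k]) ω ∂μ :=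
      (integral_condExp (ℱ.le k) (f := M k * Z k)).symm
    rw [h1, integral_congr_ae (hpull.trans h0)]
    simp
  -- second moment bounds
  have hZsq_le : ∀ k, ∫ ω, (Z k ω) ^ 2 ∂μ ≤ 4 := by
    intro k
    have hb : ∀ᵐ ω ∂μ, (Z k ω) ^ 2 ≤ (4 : ℝ) := by
      filter_upwards [hZbd k] with ω hω
      have h2 := abs_le.1 hω
      nlinarith [h2.1, h2.2]
    calc ∫ ω, (Z k ω) ^ 2 ∂μ ≤ ∫ _ω, (4 : ℝ) ∂μ :=
          integral_mono_ae (hZsq_int k) (integrable_const 4) hb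
      _ = 4 := by simp
  have hM2 : ∀ k, ∫ ω, (M k ω) ^ 2 ∂μ ≤ ∑ s ∈ Finset.range k, 4 * η (s + 1) ^ 2 := by
    intro k
    induction k with
    | zero =>
      have hM0 : M 0 = fun _ => (0 : ℝ) := by
        funext ω
        show ∑ s ∈ Finset.range 0, η (s + 1) * Z s ω = 0
        simp
      rw [hM0]
      simp
    | succ k ih =>
      have h1 : ∫ ω, (M (k + 1) ω) ^ 2 ∂μ
          = ∫ ω, (((M k ω) ^ 2 + (2 * η (k + 1)) * ((M k * Z k) ω))
            + η (k + 1) ^ 2 * (Z k ω) ^ 2) ∂μ := by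
        apply integral_congr_ae
        refine Eventually.of_forall fun ω => ?_
        rw [hMsucc k]
        simp only [Pi.mul_apply]
        ring
      rw [h1, integral_add (μ := μ)
        (f := fun ω => (M k ω) ^ 2 + (2 * η (k + 1)) * ((M k * Z k) ω))
        (g := fun ω => η (k + 1) ^ 2 * (Z k ω) ^ 2)
        ((hMsq_int k).add ((hMZ_int k).const_mul _)) ((hZsq_int k).const_mul _),
        integral_add (μ := μ) (f := fun ω => (M k ω) ^ 2)
        (g := fun ω => (2 * η (k + 1)) * ((M k * Z k) ω))
        (hMsq_int k) ((hMZ_int k).const_mul _),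
        integral_const_mul, integral_const_mul, hMZzero k, Finset.sum_range_succ]
      have h2 := hZsq_le k
      have h3 : (0 : ℝ) ≤ η (k + 1) ^ 2 := sq_nonneg _
      nlinarith [ih]
  -- L¹ bound
  set Csum : ℝ := ∑' s, η (s + 1) ^ 2 with hCsumdef
  have hCsum0 : 0 ≤ Csum := tsum_nonneg fun s => sq_nonneg _
  have hsum_le : ∀ k, ∑ s ∈ Finset.range k, 4 * η (s + 1) ^ 2 ≤ 4 * Csum := by
    intro k
    have h1 : ∑ s ∈ Finset.range k, η (s + 1) ^ 2 ≤ Csum :=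
      hη_sq.sum_le_tsum (Finset.range k) (fun s _ => sq_nonneg _)
    calc ∑ s ∈ Finset.range k, 4 * η (s + 1) ^ 2
        = 4 * ∑ s ∈ Finset.range k, η (s + 1) ^ 2 := by rw [Finset.mul_sum]
      _ ≤ 4 * Csum := by linarith
  have habs_le : ∀ k, ∫ ω, |M k ω| ∂μ ≤ (4 * Csum + 1) / 2 := by
    intro k
    have h2 : ∫ ω, |M k ω| ∂μ ≤ ∫ ω, ((M k ω) ^ 2 + 1) / 2 ∂μ := by
      refine integral_mono_ae (hMint k).abs
        (((hMsq_int k).add (integrable_const 1)).div_const 2) ?_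
      refine Eventually.of_forall fun ω => ?_
      show |M k ω| ≤ ((M k ω) ^ 2 + 1) / 2
      nlinarith [sq_abs (M k ω), sq_nonneg (|M k ω| - 1)]
    have h3 : ∫ ω, ((M k ω) ^ 2 + 1) / 2 ∂μ = ((∫ ω, (M k ω) ^ 2 ∂μ) + 1) / 2 := by
      rw [integral_div, integral_add (hMsq_int k) (integrable_const 1)]
      simp
    have h4 := le_trans (hM2 k) (hsum_le k)
    rw [h3] at h2
    linarith
  set R : NNReal := ((4 * Csum + 1) / 2).toNNReal with hRdef
  have hL1 : ∀ k, eLpNorm (M k) 1 μ ≤ (R : ENNReal) := by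
    intro k
    have h1 : eLpNorm (M k) 1 μ = ENNReal.ofReal (∫ ω, ‖M k ω‖ ∂μ) := by
      rw [eLpNorm_one_eq_lintegral_enorm, ← ofReal_integral_norm_eq_lintegral_enorm (hMint k)]
    rw [h1]
    have h2 : (R : ENNReal) = ENNReal.ofReal ((4 * Csum + 1) / 2) := rfl
    rw [h2]
    apply ENNReal.ofReal_le_ofReal
    simpa [Real.norm_eq_abs] using habs_le k
  have hMconv := hmart.submartingale.ae_tendsto_limitProcess hL1
  -- deterministic step-size bound
  set C : ℝ := 1 + Csum with hCdef
  have hCpos : 0 < C := by linarith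
  have hηC : ∀ t, 1 ≤ t → η t ≤ C := by
    intro t ht
    obtain ⟨s, rfl⟩ : ∃ s, t = s + 1 := ⟨t - 1, by omega⟩
    by_cases hcase : η (s + 1) ≤ 1
    · linarith
    · push_neg at hcase
      have h1 : η (s + 1) ≤ η (s + 1) ^ 2 := by nlinarith
      have h2 : η (s + 1) ^ 2 ≤ Csum := hη_sq.le_tsum s (fun j _ => sq_nonneg _)
      linarith
  -- boundedness of the thresholds
  have hqbd : ∀ t, 1 ≤ t → ∀ ω, -C ≤ q t ω ∧ q t ω ≤ B + C := by
    intro t ht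
    induction t, ht using Nat.le_induction with
    | base =>
      intro ω
      rw [hq_init ω]
      exact ⟨by linarith [hq1.1], by linarith [hq1.2]⟩
    | succ t ht ih =>
      intro ω
      rw [hrec t ht ω]
      obtain ⟨h1, h2⟩ := ih ω
      have hS1 := (hSrange t ht ω).1
      have hS2 := (hSrange t ht ω).2
      have hη0 := hη_nonneg t ht
      have hη1 := hηC t ht
      have hα1 := hα.1
      have hα2 := hα.2
      by_cases hcase : q t ω < S t ω
      · rw [if_pos hcase]
        have h3 : 0 ≤ η t * (1 - α) := mul_nonneg hη0 (by linarith)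
        have h4 : η t * (1 - α) ≤ C := by nlinarith
        exact ⟨by linarith, by linarith⟩
      · rw [if_neg hcase]
        push_neg at hcase
        have h3 : 0 ≤ η t * α := mul_nonneg hη0 (by linarith)
        have h4 : η t * α ≤ C := by nlinarith
        have h5 : η t * ((0 : ℝ) - α) = -(η t * α) := by ring
        rw [h5]
        exact ⟨by linarith, by linarith⟩
  -- step sizes tend to zero
  have he_to0 : Tendsto (fun n => η (n + 1)) atTop (nhds 0) := by
    have h1 : Tendsto (fun n => η (n + 1) ^ 2) atTop (nhds 0) := hη_sq.tendsto_atTop_zero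
    have h2 := (Real.continuous_sqrt.tendsto 0).comp h1
    rw [Real.sqrt_zero] at h2
    refine h2.congr fun n => ?_
    simp only [Function.comp_apply]
    rw [Real.sqrt_sq_eq_abs, abs_of_nonneg (hη_nonneg (n + 1) (Nat.le_add_left 1 n))]
  -- glue
  have hmono_all : ∀ᵐ ω ∂μ, ∀ n : ℕ, Monotone (Fc (n + 1) ω) :=
    ae_all_iff.2 fun n => (hFc_cdf (n + 1) (Nat.le_add_left 1 n)).mono fun ω hω => hω.1
  have hae_all : ∀ᵐ ω ∂μ, ∀ n : ℕ, h n ω = Fc (n + 1) ω (q (n + 1) ω) := ae_all_iff.2 hae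
  filter_upwards [hMconv, hmono_all, hae_all] with ω hMc hmonoω hhω hFconv
  have hWc : CauchySeq (fun n => ∑ s ∈ Finset.range n, η (s + 1) * Z s ω) := by
    have : (fun n => ∑ s ∈ Finset.range n, η (s + 1) * Z s ω) = fun k => M k ω := rfl
    rw [this]
    exact hMc.cauchySeq
  have hQbd' : ∀ n, |q (n + 1) ω| ≤ B + C := by
    intro n
    obtain ⟨hl, hr⟩ := hqbd (n + 1) (Nat.le_add_left 1 n) ω
    rw [abs_le]
    exact ⟨by linarith, hr⟩
  have hrec' : ∀ n, q (n + 1 + 1) ω = q (n + 1) ω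
      + η (n + 1) * ((1 - Fc (n + 1) ω (q (n + 1) ω) - α) + Z n ω) := by
    intro n
    rw [hrec (n + 1) (Nat.le_add_left 1 n) ω]
    have hZω : Z n ω = (if q (n + 1) ω < S (n + 1) ω then (1 : ℝ) else 0) - (1 - h n ω) := rfl
    rw [hZω, hhω n]
    ring
  have hstep' : ∀ n, |(1 - Fc (n + 1) ω (q (n + 1) ω) - α) + Z n ω| ≤ 1 := by
    intro n
    have hZω : Z n ω = (if q (n + 1) ω < S (n + 1) ω then (1 : ℝ) else 0) - (1 - h n ω) := rfl
    have h1 : (1 - Fc (n + 1) ω (q (n + 1) ω) - α) + Z n ω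
        = (if q (n + 1) ω < S (n + 1) ω then (1 : ℝ) else 0) - α := by
      rw [hZω, hhω n]
      ring
    rw [h1, abs_le]
    constructor <;> split_ifs <;> linarith [hα.1.le, hα.2.le]
  have hdet := det_tendsto α hα.1.le hα.2.le F qstar hFcont hlt hgt
    (fun n => η (n + 1)) (fun n => hη_nonneg (n + 1) (Nat.le_add_left 1 n)) hη_div he_to0
    (fun n => Fc (n + 1) ω) hmonoω
    (fun r => (hFconv r).comp (tendsto_add_atTop_nat 1))
    (fun n => q (n + 1) ω) (B + C) hQbd'
    (fun n => Z n ω) hrec' hstep' hWc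
  rw [← tendsto_add_atTop_iff_nat 1]
  exact hdet
end

section
/- Let α ∈ (0,1), B > 0, and let F : ℝ → [0,1] be nondecreasing with F(q) = 0 for q < 0 and F(q) = 1 for q ≥ B. Let q* ∈ [0,B] satisfy F(q*) = 1−α. Let γ > 0, c > 0, and 0 < δ ≤ B, and suppose F(q₂) − F(q₁) ≥ γ·(q₂ − q₁) whenever q* − δ ≤ q₁ ≤ q₂ ≤ q* + δ. Then for every q ∈ [−αc, B + (1−α)c] with q ≠ q*, (F(q) − (1−α))/(q − q*) ≥ γδ/(B + c). -/
/-- **Lower bound on the normalized coverage gap.**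
Let `α ∈ (0,1)`, `B > 0`, and let `F : ℝ → [0,1]` be nondecreasing with `F q = 0` for
`q < 0` and `F q = 1` for `q ≥ B`. Let `q* ∈ [0,B]` with `F q* = 1 - α`. Suppose `γ > 0`,
`c > 0`, `0 < δ ≤ B`, and `F q₂ - F q₁ ≥ γ (q₂ - q₁)` whenever
`q* - δ ≤ q₁ ≤ q₂ ≤ q* + δ`. Then for every `q ∈ [-αc, B + (1-α)c]` with `q ≠ q*`,
`(F q - (1-α)) / (q - q*) ≥ γδ/(B+c)`. -/
theorem coverage_gap_ratio_lower_bound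
    (α B : ℝ) (hα : α ∈ Set.Ioo (0 : ℝ) 1) (hB : 0 < B)
    (F : ℝ → ℝ)
    (hF01 : ∀ r, F r ∈ Set.Icc (0 : ℝ) 1)
    (hFmono : Monotone F)
    (hF0 : ∀ r, r < 0 → F r = 0)
    (hF1 : ∀ r, B ≤ r → F r = 1)
    (qstar : ℝ) (hqstar : qstar ∈ Set.Icc 0 B) (hFqstar : F qstar = 1 - α)
    (γ c δ : ℝ) (hγ : 0 < γ) (hc : 0 < c) (hδ : 0 < δ) (hδB : δ ≤ B)
    (hdens : ∀ q₁ q₂, qstar - δ ≤ q₁ → q₁ ≤ q₂ → q₂ ≤ qstar + δ →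
      γ * (q₂ - q₁) ≤ F q₂ - F q₁) :
    ∀ q ∈ Set.Icc (-(α * c)) (B + (1 - α) * c), q ≠ qstar →
      γ * δ / (B + c) ≤ (F q - (1 - α)) / (q - qstar) := by
  intro q hq hne
  obtain ⟨hq1, hq2⟩ := hq
  obtain ⟨hα0, hα1⟩ := hα
  obtain ⟨hqs0, hqsB⟩ := hqstar
  have hBc : (0:ℝ) < B + c := by linarith
  have hratio : γ * δ / (B + c) ≤ γ := by
    rw [div_le_iff₀ hBc]; nlinarith
  rcases lt_or_gt_of_ne hne with hlt | hgt
  · -- q < qstar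
    have hd : 0 < qstar - q := by linarith
    have heq : (F q - (1 - α)) / (q - qstar) = ((1 - α) - F q) / (qstar - q) := by
      rw [← neg_div_neg_eq, neg_sub, neg_sub]
    rw [heq, le_div_iff₀ hd]
    have hdle : qstar - q ≤ B + c := by nlinarith
    rcases le_or_gt (qstar - δ) q with h1 | h1
    · have := hdens q qstar h1 (le_of_lt hlt) (by linarith)
      rw [hFqstar] at this
      nlinarith
    · have := hdens (qstar - δ) qstar (le_refl _) (by linarith) (by linarith)
      rw [hFqstar] at this
      have hm : F q ≤ F (qstar - δ) := hFmono (le_of_lt h1)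
      have h2 : γ * δ ≤ (1 - α) - F q := by nlinarith
      calc γ * δ / (B + c) * (qstar - q) ≤ γ * δ / (B + c) * (B + c) := by
            apply mul_le_mul_of_nonneg_left hdle (by positivity)
        _ = γ * δ := div_mul_cancel₀ _ (ne_of_gt hBc)
        _ ≤ (1 - α) - F q := h2
  · -- q > qstar
    have hd : 0 < q - qstar := by linarith
    rw [le_div_iff₀ hd]
    have hdle : q - qstar ≤ B + c := by nlinarith
    rcases le_or_gt q (qstar + δ) with h1 | h1
    · have := hdens qstar q (by linarith) (le_of_lt hgt) h1
      rw [hFqstar] at this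
      nlinarith
    · have := hdens qstar (qstar + δ) (by linarith) (by linarith) (le_refl _)
      rw [hFqstar] at this
      have hm : F (qstar + δ) ≤ F q := hFmono (le_of_lt h1)
      have h2 : γ * δ ≤ F q - (1 - α) := by nlinarith
      calc γ * δ / (B + c) * (q - qstar) ≤ γ * δ / (B + c) * (B + c) := by
            apply mul_le_mul_of_nonneg_left hdle (by positivity)
        _ = γ * δ := div_mul_cancel₀ _ (ne_of_gt hBc)
        _ ≤ F q - (1 - α) := h2
end
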